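/- arXiv:1404.2829 — 3 statements merged into one kernel-verified Lean document; each statement's English description precedes it below -/
import Mathlib

section
/- Let F : R → R be continuous with F > 0. Then any two solutions of the ODE x'(t) = F(x(t)) with the same initial condition x(0) = a coincide on the intersection of their domains, i.e. solutions of y' = F(y) with F > 0 continuous are unique. -/
/-! Separation of variables: with `G z = ∫ w in a..z, 1 / F w`, the function `G ∘ x - id` has
zero derivative along any solution `x`, so `G (x u) = u` on the (interval) domain of `x`.
Since `F > 0`, `G` is strictly increasing, hence injective, and `x u` is determined by `u`. -/

open intervalIntegral

theorem Convex.eq_of_hasDerivWithinAt_zero {E : Type*} [NormedAddCommGroup E]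
    [NormedSpace ℝ E] {f : ℝ → E} {s : Set ℝ} (hs : Convex ℝ s)
    (hf : ∀ u ∈ s, HasDerivWithinAt f 0 s u) {u v : ℝ} (hu : u ∈ s) (hv : v ∈ s) :
    f u = f v := by
  have := hs.norm_image_sub_le_of_norm_hasDerivWithin_le hf (fun _ _ => norm_zero.le) hv hu
  simpa [sub_eq_zero] using this

theorem hasDerivAt_integral_inv {F : ℝ → ℝ} (hF : Continuous F) (hF₀ : ∀ y, F y ≠ 0)
    (a z : ℝ) : HasDerivAt (fun z => ∫ w in a..z, (F w)⁻¹) (F z)⁻¹ z :=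
  have hFinv : Continuous fun w => (F w)⁻¹ := hF.inv₀ hF₀
  integral_hasDerivAt_right (hFinv.intervalIntegrable a z)
    hFinv.stronglyMeasurable.stronglyMeasurableAtFilter hFinv.continuousAt

theorem strictMono_integral_inv {F : ℝ → ℝ} (hF : Continuous F) (hF_pos : ∀ y, 0 < F y)
    (a : ℝ) : StrictMono fun z => ∫ w in a..z, (F w)⁻¹ :=
  strictMono_of_hasDerivAt_pos (hasDerivAt_integral_inv hF (fun y => (hF_pos y).ne') a)
    fun z => inv_pos.mpr (hF_pos z)

theorem integral_inv_eq_sub_of_hasDerivAt {F : ℝ → ℝ} (hF : Continuous F)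
    (hF₀ : ∀ y, F y ≠ 0) {s : Set ℝ} (hs : s.OrdConnected) {x : ℝ → ℝ}
    (hx : ∀ u ∈ s, HasDerivAt x (F (x u)) u) {t₀ u : ℝ} (ht₀ : t₀ ∈ s) (hu : u ∈ s) :
    ∫ w in x t₀..x u, (F w)⁻¹ = u - t₀ := by
  have hconst : ∀ v ∈ s,
      HasDerivWithinAt (fun v => (∫ w in x t₀..x v, (F w)⁻¹) - v) 0 s v := by
    intro v hv
    have := ((hasDerivAt_integral_inv hF hF₀ (x t₀) (x v)).comp v (hx v hv)).sub
      (hasDerivAt_id v)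
    rw [inv_mul_cancel₀ (hF₀ _), sub_self] at this
    exact this.hasDerivWithinAt
  have := hs.convex.eq_of_hasDerivWithinAt_zero hconst hu ht₀
  simp only [integral_same, zero_sub] at this
  linarith

theorem stmt_1_general (F : ℝ → ℝ) (hF : Continuous F) (hFpos : ∀ y, 0 < F y)
    (s t : Set ℝ) (hs' : s.OrdConnected) (ht' : t.OrdConnected)
    (h0s : (0 : ℝ) ∈ s) (h0t : (0 : ℝ) ∈ t)
    (x y : ℝ → ℝ) (a : ℝ)
    (hx : ∀ u ∈ s, HasDerivAt x (F (x u)) u)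
    (hy : ∀ u ∈ t, HasDerivAt y (F (y u)) u)
    (hx0 : x 0 = a) (hy0 : y 0 = a) :
    ∀ u ∈ s ∩ t, x u = y u := by
  rintro u ⟨hus, hut⟩
  have hF₀ : ∀ y, F y ≠ 0 := fun y => (hFpos y).ne'
  have hxu := integral_inv_eq_sub_of_hasDerivAt hF hF₀ hs' hx h0s hus
  have hyu := integral_inv_eq_sub_of_hasDerivAt hF hF₀ ht' hy h0t hut
  rw [hx0] at hxu
  rw [hy0] at hyu
  exact (strictMono_integral_inv hF hFpos a).injective (hxu.trans hyu.symm)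

theorem stmt_1 (F : ℝ → ℝ) (hF : Continuous F) (hFpos : ∀ y, 0 < F y)
    (s t : Set ℝ) (hs : IsOpen s) (hs' : s.OrdConnected) (ht : IsOpen t) (ht' : t.OrdConnected)
    (h0s : (0 : ℝ) ∈ s) (h0t : (0 : ℝ) ∈ t)
    (x y : ℝ → ℝ) (a : ℝ)
    (hx : ∀ u ∈ s, HasDerivAt x (F (x u)) u)
    (hy : ∀ u ∈ t, HasDerivAt y (F (y u)) u)
    (hx0 : x 0 = a) (hy0 : y 0 = a) :
    ∀ u ∈ s ∩ t, x u = y u :=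
  stmt_1_general F hF hFpos s t hs' ht' h0s h0t x y a hx hy hx0 hy0
end

section
/- Let h : S^1 → S^1 be a non-decreasing map of degree one, let G(h) denote the 'filled graph' of h (the union of vertical segments {x}×[h_l(x), h_r(x)]), and suppose f, g are circle homeomorphisms with g ∘ h = h ∘ f. Then the map (x,y) ↦ (f(x), g(y)) maps G(h) onto G(h), and hence maps M_h = S^1×S^1 ∖ G(h) onto M_h. -/
/-!
Conjugating by order isomorphisms commutes with one-sided suprema and infima: if `h ∘ f = g ∘ h`
with `f`, `g` order isomorphisms, then `f` maps `Iio x` onto `Iio (f x)`, so `g` carries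
`h_l x = sSup (h '' Iio x)` to `sSup (h '' Iio (f x)) = h_l (f x)`, and likewise for `h_r`.
Hence `(x, y) ↦ (f x, g y)` preserves the filled graph `h_l x ≤ y ≤ h_r x` in both directions,
and, being a bijection, maps the filled graph and its complement onto themselves. Continuous
monotone lifts of degree one are surjective, so `f` and `g` are order isomorphisms of `ℝ`.
-/

open Set Function

section FilledGraph

variable {α β : Type*} [Preorder α] [ConditionallyCompleteLattice β]

def filledGraph (h : α → β) : Set (α × β) :=
  {p | sSup (h '' Iio p.1) ≤ p.2 ∧ p.2 ≤ sInf (h '' Ioi p.1)}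

variable {h : α → β} {f : α ≃o α} {g : β ≃o β}

theorem map_sSup_image_Iio_of_semiconj [NoMinOrder α] (hh : Monotone h) (hsemi : Semiconj h f g)
    (x : α) : g (sSup (h '' Iio x)) = sSup (h '' Iio (f x)) := by
  have hne : (h '' Iio x).Nonempty := nonempty_Iio.image h
  have hbdd : BddAbove (h '' Iio x) := ⟨h x, forall_mem_image.2 fun _ hz => hh (le_of_lt hz)⟩
  rw [g.map_csSup' hne hbdd, image_image, ← f.image_Iio, image_image]
  simp only [hsemi.eq]

theorem map_sInf_image_Ioi_of_semiconj [NoMaxOrder α] (hh : Monotone h) (hsemi : Semiconj h f g)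
    (x : α) : g (sInf (h '' Ioi x)) = sInf (h '' Ioi (f x)) :=
  map_sSup_image_Iio_of_semiconj (α := αᵒᵈ) (β := βᵒᵈ) (f := f.dual) (g := g.dual) hh.dual hsemi x

theorem preimage_prodMap_filledGraph [NoMinOrder α] [NoMaxOrder α] (hh : Monotone h)
    (hsemi : Semiconj h f g) : Prod.map f g ⁻¹' filledGraph h = filledGraph h := by
  ext ⟨x, y⟩
  simp only [filledGraph, mem_preimage, Prod.map_apply, mem_ofPred_eq,
    ← map_sSup_image_Iio_of_semiconj hh hsemi, ← map_sInf_image_Ioi_of_semiconj hh hsemi,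
    g.le_iff_le]

end FilledGraph

theorem Function.Surjective.image_eq_of_preimage_eq {α : Type*} {f : α → α} (hf : Surjective f)
    {s : Set α} (hs : f ⁻¹' s = s) : f '' s = s := by
  conv_lhs => rw [← hs]
  exact hf.image_preimage s

theorem surjective_of_continuous_of_map_add_one {f : ℝ → ℝ} (hf : Monotone f) (hfc : Continuous f)
    (hf1 : ∀ x, f (x + 1) = f x + 1) : Surjective f :=
  (CircleDeg1Lift.mk ⟨f, hf⟩ hf1).continuous_iff_surjective.1 hfc

theorem stmt_5_general (h f g : ℝ → ℝ)
    (hh : Monotone h)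
    (hf : StrictMono f) (hfc : Continuous f) (hfper : ∀ x, f (x + 1) = f x + 1)
    (hg : StrictMono g) (hgc : Continuous g) (hgper : ∀ x, g (x + 1) = g x + 1)
    (hsemi : g ∘ h = h ∘ f) :
    (fun p : ℝ × ℝ => (f p.1, g p.2)) ''
        {p : ℝ × ℝ | sSup (h '' Set.Iio p.1) ≤ p.2 ∧ p.2 ≤ sInf (h '' Set.Ioi p.1)} =
      {p : ℝ × ℝ | sSup (h '' Set.Iio p.1) ≤ p.2 ∧ p.2 ≤ sInf (h '' Set.Ioi p.1)} ∧
    (fun p : ℝ × ℝ => (f p.1, g p.2)) ''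
        {p : ℝ × ℝ | sSup (h '' Set.Iio p.1) ≤ p.2 ∧ p.2 ≤ sInf (h '' Set.Ioi p.1)}ᶜ =
      {p : ℝ × ℝ | sSup (h '' Set.Iio p.1) ≤ p.2 ∧ p.2 ≤ sInf (h '' Set.Ioi p.1)}ᶜ := by
  have hfs := surjective_of_continuous_of_map_add_one hf.monotone hfc hfper
  have hgs := surjective_of_continuous_of_map_add_one hg.monotone hgc hgper
  have hpre : Prod.map f g ⁻¹' filledGraph h = filledGraph h :=
    preimage_prodMap_filledGraph (f := hf.orderIsoOfSurjective f hfs)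
      (g := hg.orderIsoOfSurjective g hgs) hh (semiconj_iff_comp_eq.2 hsemi.symm)
  have hsurj : Surjective (Prod.map f g) := hfs.prodMap hgs
  have hpre_compl : Prod.map f g ⁻¹' (filledGraph h)ᶜ = (filledGraph h)ᶜ := by
    rw [preimage_compl, hpre]
  exact ⟨hsurj.image_eq_of_preimage_eq hpre, hsurj.image_eq_of_preimage_eq hpre_compl⟩

theorem stmt_5 (h f g : ℝ → ℝ)
    (hh : Monotone h) (hhper : ∀ x, h (x + 1) = h x + 1)
    (hf : StrictMono f) (hfc : Continuous f) (hfper : ∀ x, f (x + 1) = f x + 1)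
    (hg : StrictMono g) (hgc : Continuous g) (hgper : ∀ x, g (x + 1) = g x + 1)
    (hsemi : g ∘ h = h ∘ f) :
    (fun p : ℝ × ℝ => (f p.1, g p.2)) ''
        {p : ℝ × ℝ | sSup (h '' Set.Iio p.1) ≤ p.2 ∧ p.2 ≤ sInf (h '' Set.Ioi p.1)} =
      {p : ℝ × ℝ | sSup (h '' Set.Iio p.1) ≤ p.2 ∧ p.2 ≤ sInf (h '' Set.Ioi p.1)} ∧
    (fun p : ℝ × ℝ => (f p.1, g p.2)) ''
        {p : ℝ × ℝ | sSup (h '' Set.Iio p.1) ≤ p.2 ∧ p.2 ≤ sInf (h '' Set.Ioi p.1)}ᶜ =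
      {p : ℝ × ℝ | sSup (h '' Set.Iio p.1) ≤ p.2 ∧ p.2 ≤ sInf (h '' Set.Ioi p.1)}ᶜ :=
  stmt_5_general h f g hh hf hfc hfper hg hgc hgper hsemi
end

section
/- Let f and g be orientation-preserving circle homeomorphisms semi-conjugate via a non-decreasing degree-one map h (g ∘ h = h ∘ f). If g has no fixed point and x is a discontinuity point of h, then the open interval (h_l(x), h_r(x)) is disjoint from its image under g. -/
/-!
Since `g (h x) = h (f x)` and `g` has no fixed point, `f x ≠ x`. If `x < f x`, continuity of `f`
gives `z < x` with `x < f z`, so `h_r(x) ≤ h (f z) = g (h z) ≤ g (h_l(x))` and the monotone `g`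
pushes the jump interval to the right of `h_r(x)`; if `f x < x`, symmetrically to the left of
`h_l(x)`.
-/

open Set Filter Topology

theorem Monotone.disjoint_Ioo_image_Ioo {α : Type*} [Preorder α] {g : α → α}
    {a b : α} (hg : Monotone g) (hab : b ≤ g a ∨ g b ≤ a) :
    Disjoint (Ioo a b) (g '' Ioo a b) := by
  rw [Set.disjoint_right]
  rintro _ ⟨y, hy, rfl⟩ ⟨hay, hyb⟩
  rcases hab with hb | ha
  · exact (hb.trans (hg hy.1.le)).not_gt hyb
  · exact ((hg hy.2.le).trans ha).not_gt hay

section Semiconjugacy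

variable {α β : Type*} [LinearOrder α] [TopologicalSpace α] [OrderTopology α]
  [DenselyOrdered α] [ConditionallyCompleteLinearOrder β]
  {h : α → β} {f : α → α} {g : β → β} {x : α}

theorem sInf_image_Ioi_le_map_sSup_image_Iio [NoMinOrder α] (hh : Monotone h) (hg : Monotone g)
    (hf : ContinuousAt f x) (hsemi : g ∘ h = h ∘ f) (hx : x < f x) :
    sInf (h '' Ioi x) ≤ g (sSup (h '' Iio x)) := by
  have hfz : ∀ᶠ z in 𝓝[<] x, x < f z :=
    (hf.tendsto.mono_left nhdsWithin_le_nhds).eventually (lt_mem_nhds hx)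
  obtain ⟨z, hfz, hzx⟩ := (hfz.and self_mem_nhdsWithin).exists
  calc sInf (h '' Ioi x) ≤ h (f z) := csInf_le (hh.map_bddBelow bddBelow_Ioi) ⟨f z, hfz, rfl⟩
    _ = g (h z) := (congrFun hsemi z).symm
    _ ≤ g (sSup (h '' Iio x)) := hg (le_csSup (hh.map_bddAbove bddAbove_Iio) ⟨z, hzx, rfl⟩)

theorem map_sInf_image_Ioi_le_sSup_image_Iio [NoMaxOrder α] (hh : Monotone h) (hg : Monotone g)
    (hf : ContinuousAt f x) (hsemi : g ∘ h = h ∘ f) (hx : f x < x) :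
    g (sInf (h '' Ioi x)) ≤ sSup (h '' Iio x) := by
  have hfz : ∀ᶠ z in 𝓝[>] x, f z < x :=
    (hf.tendsto.mono_left nhdsWithin_le_nhds).eventually (gt_mem_nhds hx)
  obtain ⟨z, hfz, hxz⟩ := (hfz.and self_mem_nhdsWithin).exists
  calc g (sInf (h '' Ioi x)) ≤ g (h z) :=
        hg (csInf_le (hh.map_bddBelow bddBelow_Ioi) ⟨z, hxz, rfl⟩)
    _ = h (f z) := congrFun hsemi z
    _ ≤ sSup (h '' Iio x) := le_csSup (hh.map_bddAbove bddAbove_Iio) ⟨f z, hfz, rfl⟩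

end Semiconjugacy

theorem stmt_13_general (h f g : ℝ → ℝ)
    (hh : Monotone h)
    (hfc : Continuous f)
    (hg : StrictMono g)
    (hsemi : g ∘ h = h ∘ f)
    (hnofix : ∀ (x : ℝ) (m : ℤ), g x ≠ x + m)
    (x : ℝ) :
    Disjoint (Set.Ioo (sSup (h '' Set.Iio x)) (sInf (h '' Set.Ioi x)))
      (g '' Set.Ioo (sSup (h '' Set.Iio x)) (sInf (h '' Set.Ioi x))) := by
  have hfx : f x ≠ x := fun hx => hnofix (h x) 0 (by simpa [hx] using congrFun hsemi x)
  refine hg.monotone.disjoint_Ioo_image_Ioo ?_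
  rcases hfx.lt_or_gt with hlt | hgt
  · exact Or.inr (map_sInf_image_Ioi_le_sSup_image_Iio hh hg.monotone hfc.continuousAt hsemi hlt)
  · exact Or.inl (sInf_image_Ioi_le_map_sSup_image_Iio hh hg.monotone hfc.continuousAt hsemi hgt)

theorem stmt_13 (h f g : ℝ → ℝ)
    (hh : Monotone h) (hhper : ∀ x, h (x + 1) = h x + 1)
    (hf : StrictMono f) (hfc : Continuous f) (hfper : ∀ x, f (x + 1) = f x + 1)
    (hg : StrictMono g) (hgc : Continuous g) (hgper : ∀ x, g (x + 1) = g x + 1)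
    (hsemi : g ∘ h = h ∘ f)
    (hnofix : ∀ (x : ℝ) (m : ℤ), g x ≠ x + m)
    (x : ℝ) (hdisc : sSup (h '' Set.Iio x) < sInf (h '' Set.Ioi x)) :
    Disjoint (Set.Ioo (sSup (h '' Set.Iio x)) (sInf (h '' Set.Ioi x)))
      (g '' Set.Ioo (sSup (h '' Set.Iio x)) (sInf (h '' Set.Ioi x))) :=
  stmt_13_general h f g hh hfc hg hsemi hnofix x
end
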